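/- Let κ > 0, τ ≠ 0 and H ∈ ℝ, and define e^{2u(x)} = 16(H²+τ²)cosh²x / [4(H²+τ²)cosh²x + (κ−4τ²)]² for x ∈ ℝ. Then 2π ∫_ℝ e^{2u(x)} dx equals (8π/(4H²+κ))·[1 + (4(H²+τ²)/(√(4H²+κ)√(4τ²−κ)))·arctan(√(4τ²−κ)/√(4H²+κ))] when κ − 4τ² < 0, and equals (8π/(4H²+κ))·[1 + (4(H²+τ²)/(√(4H²+κ)√(κ−4τ²)))·artanh(√(κ−4τ²)/√(4H²+κ))] when κ − 4τ² > 0. -/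

import Mathlib

/-!
Substituting `t = tanh x`, so that `dt = dx / cosh² x` and `cosh² x = 1 / (1 - t²)`, turns the
integral of the conformal factor into `16 (H² + τ²) ∫_{-1}^{1} dt / (b - c t²)²` with
`b = 4H² + κ > 0` and `c = κ - 4τ²`. The reduction formula
`1 / q² = (d/dt (t / q) + 1 / q) / (2b)` for `q = b - c t²` leaves `∫ dt / (b - c t²)`,
an arctangent when `c < 0` and an inverse hyperbolic tangent when `0 < c < b`.
-/

open Real MeasureTheory

/-- Agrees with `Real.artanh` on `[-1, 1]`; as `Real` is open, it is written `_root_.artanh`. -/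
noncomputable def artanh (x : ℝ) : ℝ := (1 / 2) * Real.log ((1 + x) / (1 - x))

open Set intervalIntegral

namespace Real

theorem one_sub_tanh_sq (x : ℝ) : 1 - tanh x ^ 2 = (cosh x ^ 2)⁻¹ := by
  have hc : cosh x ≠ 0 := (cosh_pos x).ne'
  rw [tanh_eq_sinh_div_cosh, div_pow, one_sub_div (pow_ne_zero 2 hc), cosh_sq_sub_sinh_sq,
    one_div]

theorem hasDerivAt_tanh (x : ℝ) : HasDerivAt tanh (1 - tanh x ^ 2) x := by
  have hc : cosh x ≠ 0 := (cosh_pos x).ne'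
  have h := (hasDerivAt_sinh x).fun_div (hasDerivAt_cosh x) hc
  simp only [← tanh_eq_sinh_div_cosh] at h
  refine h.congr_deriv ?_
  rw [one_sub_tanh_sq, ← sq, ← sq, cosh_sq_sub_sinh_sq, one_div]

theorem integral_comp_tanh_smul {E : Type*} [NormedAddCommGroup E] [NormedSpace ℝ E]
    (g : ℝ → E) : ∫ x, (1 - tanh x ^ 2) • g (tanh x) = ∫ t in (-1)..1, g t := by
  rw [integral_of_le (by norm_num), integral_Ioc_eq_integral_Ioo, ← tanh_bijOn.image_eq,
    integral_image_eq_integral_abs_deriv_smul MeasurableSet.univ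
      (fun x _ => (hasDerivAt_tanh x).hasDerivWithinAt) tanh_injective.injOn, setIntegral_univ]
  congr 1 with x
  rw [abs_of_pos (by linarith [tanh_sq_lt_one x])]

theorem integral_cosh_sq_div_sq (p c : ℝ) :
    ∫ x, cosh x ^ 2 / (p * cosh x ^ 2 + c) ^ 2 =
      ∫ t in (-1)..1, ((p + c - c * t ^ 2) ^ 2)⁻¹ := by
  rw [← integral_comp_tanh_smul]
  congr 1 with x
  have hc : cosh x ≠ 0 := (cosh_pos x).ne'
  rw [smul_eq_mul, one_sub_tanh_sq, show tanh x ^ 2 = 1 - (cosh x ^ 2)⁻¹ by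
    linarith [one_sub_tanh_sq x]]
  field_simp
  ring

end Real

theorem integral_inv_sub_mul_sq_sq_of_hasDerivAt {b c : ℝ} {L : ℝ → ℝ} (hb : b ≠ 0)
    (hq : ∀ t ∈ Icc (-1 : ℝ) 1, b - c * t ^ 2 ≠ 0)
    (hL : ∀ t ∈ Icc (-1 : ℝ) 1, HasDerivAt L (b - c * t ^ 2)⁻¹ t) :
    ∫ t in (-1)..1, ((b - c * t ^ 2) ^ 2)⁻¹ = (1 / (b - c) + (L 1 - L (-1)) / 2) / b := by
  have hq1 : b - c ≠ 0 := by simpa using hq 1 (by norm_num)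
  rw [integral_eq_sub_of_hasDerivAt (f := fun t => (t / (b - c * t ^ 2) + L t) / (2 * b))]
  · field_simp
    ring
  · intro t ht
    rw [uIcc_of_le (by norm_num)] at ht
    have hqt := hq t ht
    have hquot := (hasDerivAt_id' t).fun_div
      (((hasDerivAt_pow 2 t).const_mul c).const_sub b) hqt
    refine ((hquot.fun_add (hL t ht)).div_const (2 * b)).congr_deriv ?_
    field_simp
    ring
  · refine ContinuousOn.intervalIntegrable fun t ht => ?_
    rw [uIcc_of_le (by norm_num)] at ht
    exact (by fun_prop : Continuous fun t : ℝ => (b - c * t ^ 2) ^ 2).continuousAt.inv₀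
      (pow_ne_zero 2 (hq t ht)) |>.continuousWithinAt

theorem integral_inv_sub_mul_sq_sq_of_neg {b c : ℝ} (hb : 0 < b) (hc : c < 0) :
    ∫ t in (-1)..1, ((b - c * t ^ 2) ^ 2)⁻¹ =
      (1 / (b - c) + arctan (√(-c) / √b) / (√b * √(-c))) / b := by
  obtain ⟨s, hs, rfl⟩ : ∃ s > 0, s ^ 2 = b := ⟨√b, sqrt_pos.2 hb, sq_sqrt hb.le⟩
  obtain ⟨r, hr, rfl⟩ : ∃ r > 0, -r ^ 2 = c := ⟨√(-c), sqrt_pos.2 (by linarith), by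
    rw [sq_sqrt (by linarith), neg_neg]⟩
  rw [neg_neg, sqrt_sq hs.le, sqrt_sq hr.le, integral_inv_sub_mul_sq_sq_of_hasDerivAt (L := fun t => arctan (r / s * t) / (s * r))
    (by positivity) (fun t _ => by rw [neg_mul, sub_neg_eq_add]; positivity)]
  · rw [show r / s * -1 = -(r / s) by ring, arctan_neg]
    field_simp
    ring
  · intro t _
    refine (((hasDerivAt_arctan _).comp t ((hasDerivAt_id' t).const_mul (r / s))).div_const
      (s * r)).congr_deriv ?_
    have : s ^ 2 + r ^ 2 * t ^ 2 ≠ 0 := by positivity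
    rw [neg_mul, sub_neg_eq_add]
    field_simp

theorem artanh_neg (y : ℝ) : _root_.artanh (-y) = -_root_.artanh y := by
  rw [_root_.artanh, _root_.artanh,
    show (1 + -y) / (1 - -y) = ((1 + y) / (1 - y))⁻¹ by rw [inv_div]; ring_nf, log_inv]
  ring

theorem hasDerivAt_artanh {y : ℝ} (hy : y ∈ Ioo (-1 : ℝ) 1) :
    HasDerivAt _root_.artanh (1 - y ^ 2)⁻¹ y := by
  have h₁ : 1 + y ≠ 0 := by linarith [hy.1]
  have h₂ : 1 - y ≠ 0 := by linarith [hy.2]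
  refine ((((hasDerivAt_id' y).const_add 1).fun_div ((hasDerivAt_id' y).const_sub 1) h₂).log
    (div_ne_zero h₁ h₂) |>.const_mul (1 / 2)).congr_deriv ?_
  have : 1 - y ^ 2 ≠ 0 := by rw [← one_pow 2, sq_sub_sq]; exact mul_ne_zero h₁ h₂
  field_simp
  ring

theorem integral_inv_sub_mul_sq_sq_of_pos {b c : ℝ} (hc : 0 < c) (hcb : c < b) :
    ∫ t in (-1)..1, ((b - c * t ^ 2) ^ 2)⁻¹ =
      (1 / (b - c) + _root_.artanh (√c / √b) / (√b * √c)) / b := by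
  obtain ⟨s, hs, rfl⟩ : ∃ s > 0, s ^ 2 = b :=
    ⟨√b, sqrt_pos.2 (hc.trans hcb), sq_sqrt (by linarith)⟩
  obtain ⟨r, hr, rfl⟩ : ∃ r > 0, r ^ 2 = c := ⟨√c, sqrt_pos.2 hc, sq_sqrt hc.le⟩
  rw [sqrt_sq hs.le, sqrt_sq hr.le]
  have hlt : ∀ t ∈ Icc (-1 : ℝ) 1, r ^ 2 * t ^ 2 < s ^ 2 := fun t ht => by
    have : t ^ 2 ≤ 1 := by nlinarith [ht.1, ht.2]
    nlinarith [mul_le_mul_of_nonneg_left this (sq_nonneg r)]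
  have hmem : ∀ t ∈ Icc (-1 : ℝ) 1, r / s * t ∈ Ioo (-1 : ℝ) 1 := fun t ht =>
    abs_lt.1 <| (sq_lt_one_iff_abs_lt_one _).1 <| by
      rw [mul_pow, div_pow, div_mul_eq_mul_div, div_lt_one (by positivity)]
      exact hlt t ht
  rw [integral_inv_sub_mul_sq_sq_of_hasDerivAt
    (L := fun t => _root_.artanh (r / s * t) / (s * r)) (by positivity)
    (fun t ht => (sub_pos.2 (hlt t ht)).ne')]
  · rw [show r / s * -1 = -(r / s) by ring, _root_.artanh_neg]
    field_simp
    ring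
  · intro t ht
    have := (sub_pos.2 (hlt t ht)).ne'
    refine (((hasDerivAt_artanh (hmem t ht)).comp t
      ((hasDerivAt_id' t).const_mul (r / s))).div_const (s * r)).congr_deriv ?_
    field_simp

/-- Area of the CMC `H` sphere in `E(κ,τ)`: the integral of the conformal
factor over `ℝ × [0,2π]` has the stated closed form, according to the sign of
`κ − 4τ²`. -/
theorem area_cmc_sphere (κ τ H : ℝ) (hκ : 0 < κ) (hτ : τ ≠ 0) :
    (κ - 4 * τ ^ 2 < 0 →
      2 * Real.pi * ∫ x : ℝ,
          16 * (H ^ 2 + τ ^ 2) * Real.cosh x ^ 2 /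
            (4 * (H ^ 2 + τ ^ 2) * Real.cosh x ^ 2 + (κ - 4 * τ ^ 2)) ^ 2 =
        (8 * Real.pi / (4 * H ^ 2 + κ)) *
          (1 + (4 * (H ^ 2 + τ ^ 2) /
              (Real.sqrt (4 * H ^ 2 + κ) * Real.sqrt (4 * τ ^ 2 - κ))) *
            Real.arctan (Real.sqrt (4 * τ ^ 2 - κ) / Real.sqrt (4 * H ^ 2 + κ)))) ∧
    (0 < κ - 4 * τ ^ 2 →
      2 * Real.pi * ∫ x : ℝ,
          16 * (H ^ 2 + τ ^ 2) * Real.cosh x ^ 2 /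
            (4 * (H ^ 2 + τ ^ 2) * Real.cosh x ^ 2 + (κ - 4 * τ ^ 2)) ^ 2 =
        (8 * Real.pi / (4 * H ^ 2 + κ)) *
          (1 + (4 * (H ^ 2 + τ ^ 2) /
              (Real.sqrt (4 * H ^ 2 + κ) * Real.sqrt (κ - 4 * τ ^ 2))) *
            _root_.artanh (Real.sqrt (κ - 4 * τ ^ 2) / Real.sqrt (4 * H ^ 2 + κ)))) := by
  have ha : 0 < H ^ 2 + τ ^ 2 := by positivity
  have hb : 0 < 4 * H ^ 2 + κ := by positivity
  have hI : ∫ x : ℝ, 16 * (H ^ 2 + τ ^ 2) * cosh x ^ 2 /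
        (4 * (H ^ 2 + τ ^ 2) * cosh x ^ 2 + (κ - 4 * τ ^ 2)) ^ 2 =
      16 * (H ^ 2 + τ ^ 2) * ∫ t in (-1)..1, ((4 * H ^ 2 + κ - (κ - 4 * τ ^ 2) * t ^ 2) ^ 2)⁻¹ := by
    simp_rw [mul_div_assoc]
    rw [MeasureTheory.integral_const_mul, integral_cosh_sq_div_sq,
      show 4 * (H ^ 2 + τ ^ 2) + (κ - 4 * τ ^ 2) = 4 * H ^ 2 + κ by ring]
  have hbc : 4 * H ^ 2 + κ - (κ - 4 * τ ^ 2) = 4 * (H ^ 2 + τ ^ 2) := by ring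
  refine ⟨fun hc => ?_, fun hc => ?_⟩
  · rw [hI, integral_inv_sub_mul_sq_sq_of_neg hb hc, neg_sub, hbc]
    field_simp
    ring
  · rw [hI, integral_inv_sub_mul_sq_sq_of_pos hc (by linarith), hbc]
    field_simp
    ring
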